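/- If ρ is a classical-classical-quantum-quantum state of the form ρ_{XYAB} = Σ_{x,y} p_{xy} |x⟩⟨x|_X ⊗ |y⟩⟨y|_Y ⊗ ρ^{xy}_{AB}, then the chi-squared divergence from the set of separable states (with respect to the cut XA : BY) satisfies χ²_Sep(ρ_{XYAB}) ≤ d_A d_B − 1. -/

import Mathlib

open Matrix Kronecker BigOperators
open scoped ComplexOrder

noncomputable section

abbrev Mat (d : ℕ) := Matrix (Fin d) (Fin d) ℂ

section Defs

variable {α β α₁ β₁ α₂ β₂ γ δ : Type*}
variable [Fintype α] [DecidableEq α] [Fintype β] [DecidableEq β]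
variable [Fintype α₁] [DecidableEq α₁] [Fintype β₁] [DecidableEq β₁]
variable [Fintype α₂] [DecidableEq α₂] [Fintype β₂] [DecidableEq β₂]
variable [Fintype γ] [DecidableEq γ] [Fintype δ] [DecidableEq δ]

/-- The Choi matrix of a map on matrices. -/
def choiMatrix (S : Matrix α α ℂ → Matrix β β ℂ) : Matrix (β × α) (β × α) ℂ :=
  ∑ i : α, ∑ j : α, (S (Matrix.single i j 1)) ⊗ₖ (Matrix.single i j 1)

/-- Completely positive (via Choi's theorem). -/
def IsCPMap (S : Matrix α α ℂ → Matrix β β ℂ) : Prop := (choiMatrix S).PosSemidef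

/-- Trace preserving. -/
def IsTPMap (S : Matrix α α ℂ → Matrix β β ℂ) : Prop := ∀ X, (S X).trace = X.trace

/-- A quantum channel: completely positive and trace preserving. -/
def IsQChannel (S : Matrix α α ℂ → Matrix β β ℂ) : Prop := IsCPMap S ∧ IsTPMap S

/-- A density operator. -/
def IsDensity (ρ : Matrix α α ℂ) : Prop := ρ.PosSemidef ∧ ρ.trace = 1

/-- The old Mathlib `Matrix.PosSemidef.sqrt` (removed since), with its old definition. -/
def posSemidefSqrt {A : Matrix α α ℂ} (hA : A.PosSemidef) : Matrix α α ℂ :=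
  (hA.1.eigenvectorUnitary : Matrix α α ℂ) *
    Matrix.diagonal ((↑) ∘ (Real.sqrt ·) ∘ hA.1.eigenvalues) *
    (star (hA.1.eigenvectorUnitary : Matrix α α ℂ))

/-- Trace norm of a matrix: trace of √(AᴴA). -/
def traceNorm (A : Matrix α α ℂ) : ℝ :=
  ((posSemidefSqrt (Matrix.posSemidef_conjTranspose_mul_self A)).trace).re

/-- Hilbert–Schmidt adjoint of a map on matrices. -/
def hsAdjoint (S : Matrix α α ℂ → Matrix β β ℂ) (X : Matrix β β ℂ) : Matrix α α ℂ :=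
  ∑ i : α, ∑ j : α, ((S (Matrix.single i j 1))ᴴ * X).trace • Matrix.single i j 1

/-- Generalized (Moore–Penrose) inverse of `σ^{1/2}`, for Hermitian `σ`,
via spectral decomposition (and junk value `0` otherwise). -/
def pinvSqrt (σ : Matrix α α ℂ) : Matrix α α ℂ :=
  if hσ : σ.IsHermitian then
    (hσ.eigenvectorUnitary : Matrix α α ℂ) *
      Matrix.diagonal (fun i => (((Real.sqrt (hσ.eigenvalues i))⁻¹ : ℝ) : ℂ)) *
      (star (hσ.eigenvectorUnitary : Matrix α α ℂ))
  else 0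

/-- Quantum χ²-divergence `Tr((ρ-σ) σ^{-1/2} (ρ-σ) σ^{-1/2})`. -/
def chiSq (ρ σ : Matrix α α ℂ) : ℝ :=
  (((ρ - σ) * pinvSqrt σ * (ρ - σ) * pinvSqrt σ).trace).re

/-- Support inclusion `supp ρ ⊆ supp σ` (i.e. `ker σ ⊆ ker ρ`). -/
def SuppIncl (ρ σ : Matrix α α ℂ) : Prop :=
  ∀ v : α → ℂ, σ *ᵥ v = 0 → ρ *ᵥ v = 0

/-- Separable bipartite states. -/
def IsSepState (σ : Matrix (α × β) (α × β) ℂ) : Prop :=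
  ∃ (m : ℕ) (p : Fin m → ℝ) (ρA : Fin m → Matrix α α ℂ) (ρB : Fin m → Matrix β β ℂ),
    (∀ i, 0 ≤ p i) ∧ (∑ i, p i = 1) ∧ (∀ i, IsDensity (ρA i)) ∧ (∀ i, IsDensity (ρB i)) ∧
    σ = ∑ i, (p i : ℂ) • (ρA i ⊗ₖ ρB i)

/-- χ²-divergence to the set of separable states across the cut `α : β`. -/
def chiSqSep (τ : Matrix (α × β) (α × β) ℂ) : ℝ :=
  sInf {r | ∃ σ, IsDensity σ ∧ IsSepState σ ∧ SuppIncl τ σ ∧ r = chiSq τ σ}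

/-- Trace-norm contraction coefficient. -/
def etaTr (T : Matrix α α ℂ → Matrix β β ℂ) : ℝ :=
  sSup {r | ∃ ρ σ, IsDensity ρ ∧ IsDensity σ ∧ ρ ≠ σ ∧
    r = traceNorm (T ρ - T σ) / traceNorm (ρ - σ)}

/-- χ² contraction coefficient. -/
def etaChi (T : Matrix α α ℂ → Matrix β β ℂ) : ℝ :=
  sSup {r | ∃ ρ σ, IsDensity ρ ∧ IsDensity σ ∧ SuppIncl ρ σ ∧ ρ ≠ σ ∧
    r = chiSq (T ρ) (T σ) / chiSq ρ σ}

/-- Minimal eigenvalue of a (Hermitian) matrix. -/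
def lamMin (M : Matrix α α ℂ) : ℝ :=
  if h : M.IsHermitian then ⨅ i, h.eigenvalues i else 0

/-- The rank-one projector `|ψ⟩⟨ψ|`. -/
def projVec (ψ : α → ℂ) : Matrix α α ℂ := vecMulVec ψ (star ψ)

/-- Unit vector (pure state). -/
def IsUnitVec (ψ : α → ℂ) : Prop := star ψ ⬝ᵥ ψ = 1

/-- Partial trace over the second tensor factor. -/
def ptraceSnd (M : Matrix (α × β) (α × β) ℂ) : Matrix α α ℂ :=
  fun i j => ∑ e : β, M (i, e) (j, e)

-- Square root of a positive semidefinite matrix (junk value `0` otherwise).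
open Classical in
def matSqrt (ρ : Matrix α α ℂ) : Matrix α α ℂ :=
  if h : ρ.PosSemidef then posSemidefSqrt h else 0

/-- Fidelity `F(ρ,σ) = ‖√ρ √σ‖₁²`. -/
def fidelity (ρ σ : Matrix α α ℂ) : ℝ := (traceNorm (matSqrt ρ * matSqrt σ))^2

/-- Tensor (Kronecker) product of two maps on matrices. -/
def mapKron (S₁ : Matrix α α ℂ → Matrix α α ℂ) (S₂ : Matrix β β ℂ → Matrix β β ℂ)
    (M : Matrix (α × β) (α × β) ℂ) : Matrix (α × β) (α × β) ℂ :=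
  fun r c => ∑ i, ∑ j, ∑ k, ∑ l,
    S₁ (Matrix.single i j 1) r.1 c.1 * S₂ (Matrix.single k l 1) r.2 c.2 * M (i, k) (j, l)

/-- Induced trace norm of a map on matrices. -/
def indTraceNorm (L : Matrix α α ℂ → Matrix β β ℂ) : ℝ :=
  sSup {r | ∃ X, traceNorm X ≤ 1 ∧ r = traceNorm (L X)}

/-- Entanglement-breaking map: Kraus representation with rank-one Kraus operators. -/
def IsEntanglementBreaking (S : Matrix α α ℂ → Matrix β β ℂ) : Prop :=
  ∃ (m : ℕ) (K : Fin m → Matrix β α ℂ),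
    (∀ i, (K i).rank ≤ 1) ∧ (∑ i, (K i)ᴴ * K i = 1) ∧ ∀ X, S X = ∑ i, K i * X * (K i)ᴴ

/-- Unitary channel `X ↦ U X Uᴴ`. -/
def IsUnitaryChannel (S : Matrix α α ℂ → Matrix α α ℂ) : Prop :=
  ∃ U : Matrix α α ℂ, U ∈ Matrix.unitaryGroup α ℂ ∧ ∀ X, S X = U * X * Uᴴ

/-- Separable bipartite channel: Kraus operators of tensor product form. -/
def IsSepChannel (T : Matrix (α₁ × β₁) (α₁ × β₁) ℂ → Matrix (α₂ × β₂) (α₂ × β₂) ℂ) : Prop :=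
  ∃ (m : ℕ) (KA : Fin m → Matrix α₂ α₁ ℂ) (KB : Fin m → Matrix β₂ β₁ ℂ),
    (∑ i, (KA i ⊗ₖ KB i)ᴴ * (KA i ⊗ₖ KB i) = 1) ∧
    ∀ X, T X = ∑ i, (KA i ⊗ₖ KB i) * X * (KA i ⊗ₖ KB i)ᴴ

/-- `Id_{γ} ⊗ T ⊗ Id_{δ}` in the arrangement `(γ × α) × (β × δ)`. -/
def idTensorMap (T : Matrix (α₁ × β₁) (α₁ × β₁) ℂ → Matrix (α₂ × β₂) (α₂ × β₂) ℂ)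
    (M : Matrix ((γ × α₁) × (β₁ × δ)) ((γ × α₁) × (β₁ × δ)) ℂ) :
    Matrix ((γ × α₂) × (β₂ × δ)) ((γ × α₂) × (β₂ × δ)) ℂ :=
  fun r c => ∑ a₁ : α₁, ∑ b₁ : β₁, ∑ a₁' : α₁, ∑ b₁' : β₁,
    T (Matrix.single (a₁, b₁) (a₁', b₁') 1) (r.1.2, r.2.1) (c.1.2, c.2.1) *
      M ((r.1.1, a₁), (b₁, r.2.2)) ((c.1.1, a₁'), (b₁', c.2.2))

end Defs

/-- `n`-fold tensor power of a map on `d×d` matrices. -/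
def tpow {d : ℕ} (S : Mat d → Mat d) (n : ℕ)
    (X : Matrix (Fin n → Fin d) (Fin n → Fin d) ℂ) :
    Matrix (Fin n → Fin d) (Fin n → Fin d) ℂ :=
  fun f g => ∑ f', ∑ g', X f' g' * ∏ k, S (Matrix.single (f' k) (g' k) 1) (f k) (g k)

/-- `n`-fold Kronecker tensor power of a matrix. -/
def matTpow {d : ℕ} (A : Mat d) (n : ℕ) : Matrix (Fin n → Fin d) (Fin n → Fin d) ℂ :=
  fun f g => ∏ k, A (f k) (g k)

/-- A cc-qq state `Σ_{x,y} p_{xy} |x⟩⟨x|_X ⊗ |y⟩⟨y|_Y ⊗ ρ^{xy}_{AB}`,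
arranged across the cut `(X,A) : (B,Y)`. -/
def ccqqState {dX dY dA dB : ℕ} (p : Fin dX → Fin dY → ℝ)
    (ρ : Fin dX → Fin dY → Matrix (Fin dA × Fin dB) (Fin dA × Fin dB) ℂ) :
    Matrix ((Fin dX × Fin dA) × (Fin dB × Fin dY)) ((Fin dX × Fin dA) × (Fin dB × Fin dY)) ℂ :=
  fun r c => if r.1.1 = c.1.1 ∧ r.2.2 = c.2.2
    then (p r.1.1 r.2.2 : ℂ) * ρ r.1.1 r.2.2 (r.1.2, r.2.1) (c.1.2, c.2.1) else 0

/-!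
The separable state `σ = Σ_{x,y} p_{xy} (|x⟩⟨x| ⊗ 𝟙_A/d_A) ⊗ (𝟙_B/d_B ⊗ |y⟩⟨y|)` is diagonal,
and after regrouping the indices as `(A B) (X Y)` both `ρ` and `σ` become block diagonal over
`(x, y)`, the blocks of `σ` being the scalars `p_{xy}/(d_A d_B)`. Hence
`χ²(ρ, σ) = Σ_{x,y} p_{xy} (d_A d_B Tr (ρ^{xy})² - 1) ≤ d_A d_B - 1`, since the purity of a state
is at most `1`.
-/

open Matrix

section Diagonal

variable {n : Type*} [Fintype n] [DecidableEq n]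

lemma pinvSqrt_diagonal (c : n → ℝ) :
    pinvSqrt (diagonal fun i => (c i : ℂ)) = diagonal fun i => (((√(c i))⁻¹ : ℝ) : ℂ) := by
  have hc : (diagonal fun i => (c i : ℂ)).IsHermitian :=
    isHermitian_diagonal_iff.mpr fun i => Complex.conj_ofReal (c i)
  set U : Matrix n n ℂ := (hc.eigenvectorUnitary : Matrix n n ℂ) with hU
  -- the columns of `U` are eigenvectors, so `U i j ≠ 0` forces `c i` to be the `j`-th eigenvalue
  have hcol : ∀ i j, (c i : ℂ) * U i j = hc.eigenvalues j * U i j := fun i j => by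
    simpa [U, mulVec_diagonal] using congrFun (hc.mulVec_eigenvectorBasis j) i
  have hcomm : (diagonal fun i => (((√(c i))⁻¹ : ℝ) : ℂ)) * U =
      U * diagonal fun j => (((√(hc.eigenvalues j))⁻¹ : ℝ) : ℂ) := by
    ext i j
    rw [diagonal_mul, mul_diagonal, mul_comm]
    rcases eq_or_ne (U i j) 0 with h | h
    · rw [h, zero_mul, zero_mul]
    · rw [show c i = hc.eigenvalues j by exact_mod_cast mul_right_cancel₀ h (hcol i j)]
  rw [pinvSqrt, dif_pos hc, ← hU, ← hcomm, mul_assoc,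
    mem_unitaryGroup_iff.mp hc.eigenvectorUnitary.2, mul_one]

lemma re_trace_mul_self_le_one {ρ : Matrix n n ℂ} (hρ : IsDensity ρ) :
    (ρ * ρ).trace.re ≤ 1 := by
  obtain ⟨hpsd, htr⟩ := hρ
  have hH := hpsd.isHermitian
  have hsum : ∑ i, hH.eigenvalues i = 1 := by
    have h := hH.trace_eq_sum_eigenvalues
    rw [htr] at h
    simpa using congrArg Complex.re h.symm
  have hsq : (ρ * ρ).trace.re = ∑ i, hH.eigenvalues i ^ 2 := by
    conv_lhs => rw [hH.spectral_theorem, ← map_mul, Unitary.conjStarAlgAut_apply,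
      trace_mul_cycle, Unitary.coe_star_mul_self, one_mul, diagonal_mul_diagonal, trace_diagonal]
    simp [sq]
  have hle : ∀ i, hH.eigenvalues i ≤ 1 := fun i =>
    hsum ▸ Finset.single_le_sum (fun j _ => hpsd.eigenvalues_nonneg j) (Finset.mem_univ i)
  calc (ρ * ρ).trace.re = ∑ i, hH.eigenvalues i ^ 2 := hsq
    _ ≤ ∑ i, hH.eigenvalues i := Finset.sum_le_sum fun i _ => by
        nlinarith [hpsd.eigenvalues_nonneg i, hle i]
    _ = 1 := hsum

lemma re_trace_sq_sub_uniform_div_le [Nonempty n] {ρ : Matrix n n ℂ} (hρ : IsDensity ρ) {p : ℝ}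
    (hp : 0 ≤ p) :
    (((p : ℂ) • ρ - ((p / Fintype.card n : ℝ) : ℂ) • 1) ^ 2).trace.re / (p / Fintype.card n) ≤
      p * (Fintype.card n - 1) := by
  have htrace : (((p : ℂ) • ρ - ((p / Fintype.card n : ℝ) : ℂ) • 1) ^ 2).trace.re =
      p ^ 2 * ((ρ * ρ).trace.re - 1 / Fintype.card n) := by
    have h : (((p : ℂ) • ρ - ((p / Fintype.card n : ℝ) : ℂ) • 1) ^ 2).trace =
        ((p ^ 2 : ℝ) : ℂ) * ((ρ * ρ).trace - ((1 / Fintype.card n : ℝ) : ℂ)) := by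
      simp only [sq, sub_mul, mul_sub, smul_mul_smul, Matrix.one_mul, Matrix.mul_one, trace_sub,
        trace_smul, hρ.2, trace_one, smul_eq_mul]
      push_cast
      field_simp
      ring
    rw [h, Complex.re_ofReal_mul, Complex.sub_re, Complex.ofReal_re]
  rcases hp.eq_or_lt with rfl | hp
  · simp
  rw [htrace, div_le_iff₀ (by positivity)]
  have := re_trace_mul_self_le_one hρ
  field_simp
  nlinarith

omit [DecidableEq n] in
lemma trace_submatrix_equiv {m α : Type*} [Fintype m] [AddCommMonoid α] (A : Matrix n n α)
    (e : m ≃ n) : (A.submatrix e e).trace = A.trace :=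
  e.sum_comp fun i => A i i

lemma chiSq_submatrix_diagonal {m : Type*} [Fintype m] [DecidableEq m] (ρ : Matrix n n ℂ)
    (d : n → ℝ) (e : m ≃ n) :
    chiSq (ρ.submatrix e e) ((diagonal fun i => (d i : ℂ)).submatrix e e) =
      chiSq ρ (diagonal fun i => (d i : ℂ)) := by
  have hdiag : ∀ f : n → ℂ, (diagonal fun i => f (e i)) = (diagonal f).submatrix e e :=
    fun f => (submatrix_diagonal_equiv f e).symm
  have hsub : ∀ X Y : Matrix n n ℂ, X.submatrix e e - Y.submatrix e e = (X - Y).submatrix e e :=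
    fun _ _ => rfl
  rw [submatrix_diagonal_equiv, chiSq, chiSq, Function.comp_def, pinvSqrt_diagonal,
    pinvSqrt_diagonal, hdiag fun i => ((d i : ℝ) : ℂ),
    hdiag fun i => (((√(d i))⁻¹ : ℝ) : ℂ), hsub, submatrix_mul_equiv,
    submatrix_mul_equiv, submatrix_mul_equiv, trace_submatrix_equiv]

lemma chiSq_blockDiagonal {m o : Type*} [Fintype m] [DecidableEq m] [Fintype o] [DecidableEq o]
    (A : o → Matrix m m ℂ) (q : o → ℝ) (hq : ∀ k, 0 ≤ q k) :
    chiSq (blockDiagonal A) (diagonal fun i : m × o => (q i.2 : ℂ)) =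
      ∑ k, ((A k - (q k : ℂ) • 1) ^ 2).trace.re / q k := by
  have hblock : ∀ f : o → ℂ, (diagonal fun i : m × o => f i.2) = blockDiagonal fun k => f k • 1 :=
    fun f => by simp only [smul_one_eq_diagonal, blockDiagonal_diagonal]
  rw [chiSq, pinvSqrt_diagonal, hblock fun k => (q k : ℂ),
    hblock fun k => (((√(q k))⁻¹ : ℝ) : ℂ), ← blockDiagonal_sub, ← blockDiagonal_mul,
    ← blockDiagonal_mul, ← blockDiagonal_mul, trace_blockDiagonal, Complex.re_sum]
  refine Finset.sum_congr rfl fun k _ => ?_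
  have hs : (((√(q k))⁻¹ : ℝ) : ℂ) * (((√(q k))⁻¹ : ℝ) : ℂ) = ((q k)⁻¹ : ℝ) := by
    rw [← Complex.ofReal_mul, ← mul_inv, Real.mul_self_sqrt (hq k)]
  simp only [Matrix.mul_smul, Matrix.smul_mul, mul_one, smul_smul, hs, trace_smul, sq]
  rw [smul_eq_mul, Complex.re_ofReal_mul, div_eq_inv_mul]
  rfl

end Diagonal

section States

variable {m n : Type*} [Fintype m] [Fintype n]

def maximallyMixed (n : Type*) [Fintype n] [DecidableEq n] : Matrix n n ℂ :=
  (Fintype.card n : ℂ)⁻¹ • 1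

lemma isDensity_maximallyMixed [DecidableEq n] [Nonempty n] : IsDensity (maximallyMixed n) := by
  refine ⟨PosSemidef.one.smul (by positivity), ?_⟩
  rw [maximallyMixed, trace_smul, trace_one, smul_eq_mul,
    inv_mul_cancel₀ (by exact_mod_cast Fintype.card_ne_zero)]

lemma isDensity_single [DecidableEq n] (i : n) : IsDensity (single i i (1 : ℂ)) := by
  refine ⟨?_, trace_single_eq_same i 1⟩
  rw [← diagonal_single]
  exact posSemidef_diagonal_iff.mpr fun j => by
    rcases eq_or_ne j i with rfl | h <;> simp [*]

lemma IsDensity.kronecker {A : Matrix m m ℂ} {B : Matrix n n ℂ} (hA : IsDensity A)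
    (hB : IsDensity B) : IsDensity (A ⊗ₖ B) :=
  ⟨hA.1.kronecker hB.1, by rw [trace_kronecker, hA.2, hB.2, mul_one]⟩

lemma isSepState_sum {ι : Type*} [Fintype ι] (w : ι → ℝ) (hw : ∀ i, 0 ≤ w i)
    (hw1 : ∑ i, w i = 1) (A : ι → Matrix m m ℂ) (B : ι → Matrix n n ℂ)
    (hA : ∀ i, IsDensity (A i)) (hB : ∀ i, IsDensity (B i)) :
    IsSepState (∑ i, (w i : ℂ) • (A i ⊗ₖ B i)) := by
  let e := Fintype.equivFin ι
  refine ⟨Fintype.card ι, w ∘ e.symm, A ∘ e.symm, B ∘ e.symm, fun k => hw _,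
    by rw [← hw1, ← e.symm.sum_comp]; rfl, fun k => hA _, fun k => hB _, ?_⟩
  exact (e.symm.sum_comp fun i => (w i : ℂ) • (A i ⊗ₖ B i)).symm

lemma IsSepState.isDensity {σ : Matrix (m × n) (m × n) ℂ} (hσ : IsSepState σ) :
    IsDensity σ := by
  obtain ⟨k, w, A, B, hw, hw1, hA, hB, rfl⟩ := hσ
  refine ⟨posSemidef_sum _ fun i _ => ((hA i).kronecker (hB i)).1.smul ?_, ?_⟩
  · exact_mod_cast hw i
  · simp only [trace_sum, trace_smul, ((hA _).kronecker (hB _)).2, smul_eq_mul, mul_one]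
    exact_mod_cast hw1

lemma suppIncl_diagonal [DecidableEq n] {τ : Matrix n n ℂ} {d : n → ℂ}
    (h : ∀ i j, d j = 0 → τ i j = 0) : SuppIncl τ (diagonal d) := by
  intro v hv
  ext i
  refine Finset.sum_eq_zero fun j _ => ?_
  have hj := congrFun hv j
  rw [mulVec_diagonal, Pi.zero_apply, mul_eq_zero] at hj
  rcases hj with hd | hv
  · exact mul_eq_zero_of_left (h i j hd) _
  · exact mul_eq_zero_of_right _ hv

lemma chiSqSep_le_of_chiSq_le [DecidableEq m] [DecidableEq n] {τ σ : Matrix (m × n) (m × n) ℂ}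
    {r : ℝ} (hσ : IsSepState σ) (hτσ : SuppIncl τ σ) (h : chiSq τ σ ≤ r) (hr : 0 ≤ r) :
    chiSqSep τ ≤ r := by
  by_cases hbdd : BddBelow {r | ∃ σ, IsDensity σ ∧ IsSepState σ ∧ SuppIncl τ σ ∧ r = chiSq τ σ}
  · exact (csInf_le hbdd ⟨σ, hσ.isDensity, hσ, hτσ, rfl⟩).trans h
  · -- `sInf` of a set of reals that is not bounded below is `0`
    rwa [chiSqSep, Real.sInf_of_not_bddBelow hbdd]

end States

def cutEquiv (X A B Y : Type*) : (X × A) × (B × Y) ≃ (A × B) × (X × Y) where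
  toFun i := ((i.1.2, i.2.1), (i.1.1, i.2.2))
  invFun j := ((j.2.1, j.1.1), (j.1.2, j.2.2))
  left_inv _ := rfl
  right_inv _ := rfl

lemma ccqqState_eq_submatrix_blockDiagonal {dX dY dA dB : ℕ} (p : Fin dX → Fin dY → ℝ)
    (ρ : Fin dX → Fin dY → Matrix (Fin dA × Fin dB) (Fin dA × Fin dB) ℂ) :
    ccqqState p ρ = (blockDiagonal fun k : Fin dX × Fin dY => (p k.1 k.2 : ℂ) • ρ k.1 k.2).submatrix
      (cutEquiv _ _ _ _) (cutEquiv _ _ _ _) := by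
  ext ⟨⟨x, a⟩, b, y⟩ ⟨⟨x', a'⟩, b', y'⟩
  simp [ccqqState, blockDiagonal_apply, cutEquiv]

section Uniform

variable {X A B Y : Type*} [Fintype X] [DecidableEq X] [Fintype A] [DecidableEq A]
  [Fintype B] [DecidableEq B] [Fintype Y] [DecidableEq Y]

def ccqqUniformState (A B : Type*) [Fintype A] [DecidableEq A] [Fintype B] [DecidableEq B]
    (p : X → Y → ℝ) : Matrix ((X × A) × (B × Y)) ((X × A) × (B × Y)) ℂ :=
  ∑ k : X × Y, (p k.1 k.2 : ℂ) • ((single k.1 k.1 1 ⊗ₖ maximallyMixed A) ⊗ₖ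
    (maximallyMixed B ⊗ₖ single k.2 k.2 1))

lemma isSepState_ccqqUniformState [Nonempty A] [Nonempty B] {p : X → Y → ℝ}
    (hp : ∀ x y, 0 ≤ p x y) (hp1 : ∑ x, ∑ y, p x y = 1) :
    IsSepState (ccqqUniformState A B p) :=
  isSepState_sum (fun k : X × Y => p k.1 k.2) (fun k => hp k.1 k.2)
    (by rw [← hp1, Fintype.sum_prod_type]) (fun k => single k.1 k.1 1 ⊗ₖ maximallyMixed A)
    (fun k => maximallyMixed B ⊗ₖ single k.2 k.2 1)
    (fun k => (isDensity_single k.1).kronecker isDensity_maximallyMixed)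
    (fun k => isDensity_maximallyMixed.kronecker (isDensity_single k.2))

lemma ccqqUniformState_eq_diagonal (p : X → Y → ℝ) :
    ccqqUniformState A B p = diagonal fun i =>
      ((p i.1.1 i.2.2 / (Fintype.card A * Fintype.card B) : ℝ) : ℂ) := by
  ext ⟨⟨x, a⟩, b, y⟩ ⟨⟨x', a'⟩, b', y'⟩
  simp only [ccqqUniformState, maximallyMixed, Complex.coe_smul, Matrix.sum_apply,
    Matrix.smul_apply, kroneckerMap_apply, single_apply, one_apply, smul_eq_mul, mul_ite, mul_one,
    mul_zero, ite_mul, one_mul, zero_mul, smul_ite, Complex.real_smul, smul_zero,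
    Complex.ofReal_div, Complex.ofReal_mul, Complex.ofReal_natCast, diagonal_apply, Prod.mk.injEq]
  rw [Fintype.sum_prod_type]
  by_cases h : (x = x' ∧ a = a') ∧ b = b' ∧ y = y'
  · obtain ⟨⟨rfl, rfl⟩, rfl, rfl⟩ := h
    simp [div_eq_mul_inv, mul_comm]
  · rw [if_neg h]
    refine Finset.sum_eq_zero fun x₀ _ => Finset.sum_eq_zero fun y₀ _ => ?_
    split_ifs with hy hb ha hx <;>
      first | rfl | exact absurd ⟨⟨hx.1.symm.trans hx.2, ha⟩, hb, hy.1.symm.trans hy.2⟩ h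

lemma ccqqUniformState_eq_submatrix (p : X → Y → ℝ) :
    ccqqUniformState A B p = (diagonal fun j : (A × B) × (X × Y) =>
      ((p j.2.1 j.2.2 / (Fintype.card A * Fintype.card B) : ℝ) : ℂ)).submatrix
        (cutEquiv X A B Y) (cutEquiv X A B Y) := by
  rw [submatrix_diagonal_equiv, ccqqUniformState_eq_diagonal]
  rfl

end Uniform

lemma suppIncl_ccqqState_ccqqUniformState {dX dY dA dB : ℕ} [NeZero dA] [NeZero dB]
    (p : Fin dX → Fin dY → ℝ) (ρ : Fin dX → Fin dY → Matrix (Fin dA × Fin dB) (Fin dA × Fin dB) ℂ) :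
    SuppIncl (ccqqState p ρ) (ccqqUniformState (Fin dA) (Fin dB) p) := by
  rw [ccqqUniformState_eq_diagonal]
  refine suppIncl_diagonal fun i j hj => ?_
  have hpj : p j.1.1 j.2.2 = 0 := by simpa [NeZero.ne] using hj
  simp only [ccqqState]
  split_ifs with h
  · rw [h.1, h.2, hpj, Complex.ofReal_zero, zero_mul]
  · rfl

theorem stmt8_general {dX dY dA dB : ℕ} (hA : 0 < dA) (hB : 0 < dB)
    (p : Fin dX → Fin dY → ℝ) (hp : ∀ x y, 0 ≤ p x y) (hp1 : ∑ x, ∑ y, p x y = 1)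
    (ρ : Fin dX → Fin dY → Matrix (Fin dA × Fin dB) (Fin dA × Fin dB) ℂ)
    (hρ : ∀ x y, IsDensity (ρ x y)) :
    chiSqSep (ccqqState p ρ) ≤ (dA : ℝ) * dB - 1 := by
  have : NeZero dA := ⟨hA.ne'⟩
  have : NeZero dB := ⟨hB.ne'⟩
  have hd : (1 : ℝ) ≤ dA * dB :=
    one_le_mul_of_one_le_of_one_le (Nat.one_le_cast.mpr hA) (Nat.one_le_cast.mpr hB)
  refine chiSqSep_le_of_chiSq_le (isSepState_ccqqUniformState hp hp1)
    (suppIncl_ccqqState_ccqqUniformState p ρ) ?_ (sub_nonneg.mpr hd)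
  set q : Fin dX × Fin dY → ℝ :=
    fun k => p k.1 k.2 / (Fintype.card (Fin dA) * Fintype.card (Fin dB))
  calc chiSq (ccqqState p ρ) (ccqqUniformState (Fin dA) (Fin dB) p)
      = ∑ k, (((p k.1 k.2 : ℂ) • ρ k.1 k.2 - (q k : ℂ) • 1) ^ 2).trace.re / q k := by
        rw [ccqqUniformState_eq_submatrix, ccqqState_eq_submatrix_blockDiagonal,
          chiSq_submatrix_diagonal,
          chiSq_blockDiagonal _ q fun k => div_nonneg (hp _ _) (by positivity)]
    _ ≤ ∑ k : Fin dX × Fin dY, p k.1 k.2 * (dA * dB - 1) := Finset.sum_le_sum fun k _ => by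
        simpa [q] using re_trace_sq_sub_uniform_div_le (hρ k.1 k.2) (hp k.1 k.2)
    _ = dA * dB - 1 := by rw [← Finset.sum_mul, Fintype.sum_prod_type, hp1, one_mul]

/-- for a cc-qq state, `χ²_Sep(ρ_{XYAB}) ≤ d_A d_B − 1` across the cut `XA : BY`. -/
theorem stmt8 {dX dY dA dB : ℕ} (hX : 0 < dX) (hY : 0 < dY) (hA : 0 < dA) (hB : 0 < dB)
    (p : Fin dX → Fin dY → ℝ) (hp : ∀ x y, 0 ≤ p x y) (hp1 : ∑ x, ∑ y, p x y = 1)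
    (ρ : Fin dX → Fin dY → Matrix (Fin dA × Fin dB) (Fin dA × Fin dB) ℂ)
    (hρ : ∀ x y, IsDensity (ρ x y)) :
    chiSqSep (ccqqState p ρ) ≤ (dA : ℝ) * dB - 1 :=
  stmt8_general hA hB p hp hp1 ρ hρ
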